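/- arXiv:2601.06322 — 5 statements merged into one kernel-verified Lean document; each statement's English description precedes it below -/
import Mathlib

section
/- Let G be a group acting on a p-uniformly smooth Banach space E (1 < p ≤ 2) by uniformly bounded invertible linear operators, i.e. via a homomorphism π : G → GL(E) with sup_{g∈G} ‖π(g)‖_op < ∞. Then there exists a norm |||·||| on E, equivalent to the original norm, which is G-invariant (|||π(g)v||| = |||v||| for all g ∈ G and v ∈ E) and p-uniformly smooth (its modulus of uniform smoothness satisfies ρ(τ) ≤ K τ^p for some constant K and all τ > 0). -/
/-!
The norm `sup_g ‖π g x‖` is invariant and equivalent to `‖·‖`, but a supremum of smooth norms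
need not be smooth, so we use the dual construction: `N x` is the infimum of `∑ ‖yᵢ‖` over all
decompositions `x = ∑ π gᵢ yᵢ`. It is the largest invariant seminorm below `‖·‖`, and
`‖x‖ ≤ C N x` when every `‖π g‖ ≤ C`.

Up to constants, `p`-uniform smoothness of a seminorm is the homogeneous inequality
`N (y + N y • x) + N (y - N y • x) ≤ 2 N y (1 + K N x ^ p)`. Given a decomposition
`u = ∑ π gᵢ yᵢ` of cost `S`, spread `v = N u • x` over the pieces in proportion to their lengths:
`u ± v = ∑ π gᵢ (yᵢ ± ‖yᵢ‖ • zᵢ)` with `zᵢ = S⁻¹ • π gᵢ⁻¹ v`. The inequality for `‖·‖` applies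
to each piece, `‖zᵢ‖ ≤ C N x (N u / S)`, and letting `S` decrease to `N u` gives it for `N`.
-/

/-- The modulus of uniform smoothness of a norm-like function `N` on `E`:
`ρ_N(τ) = sup {(N(u+v) + N(u-v))/2 - 1 : N u ≤ 1, N v ≤ τ}`. -/
noncomputable def modulusOfSmoothnessFor {E : Type*} [AddCommGroup E] (N : E → ℝ) (τ : ℝ) : ℝ :=
  sSup {x : ℝ | ∃ u v : E, N u ≤ 1 ∧ N v ≤ τ ∧ x = (N (u + v) + N (u - v)) / 2 - 1}

open Finset

namespace Seminorm

variable {E : Type*} [AddCommGroup E] [Module ℝ E] (N : Seminorm ℝ E) {p K : ℝ}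

theorem add_smul_add_sub_smul_le_of_modulusOfSmoothnessFor_le (hp : 0 < p)
    (hN : ∀ τ : ℝ, 0 < τ → modulusOfSmoothnessFor N τ ≤ K * τ ^ p) (y x : E) :
    N (y + N y • x) + N (y - N y • x) ≤ 2 * N y * (1 + K * N x ^ p) := by
  rcases (apply_nonneg N y).eq_or_lt' with hy | hy
  · simp [hy]
  rcases (apply_nonneg N x).eq_or_lt' with hx | hx
  · have h_smul : N (N y • x) = 0 := by rw [map_smul_eq_mul, hx, mul_zero]
    rw [hx, Real.zero_rpow hp.ne', mul_zero, add_zero, mul_one]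
    linarith [map_add_le_add N y (N y • x), map_sub_le_add N y (N y • x)]
  set u := (N y)⁻¹ • y
  have hu : N u = 1 := by
    rw [map_smul_eq_mul, norm_inv, Real.norm_of_nonneg hy.le, inv_mul_cancel₀ hy.ne']
  have hbdd : BddAbove {r : ℝ | ∃ u v : E, N u ≤ 1 ∧ N v ≤ N x ∧
      r = (N (u + v) + N (u - v)) / 2 - 1} := by
    refine ⟨N x, ?_⟩
    rintro _ ⟨u', v', hu', hv', rfl⟩
    linarith [map_add_le_add N u' v', map_sub_le_add N u' v']
  have hmod : (N (u + x) + N (u - x)) / 2 - 1 ≤ K * N x ^ p :=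
    (le_csSup hbdd ⟨u, x, hu.le, le_rfl, rfl⟩).trans (hN _ hx)
  have hscale : ∀ w : E, N (N y • w) = N y * N w := fun w => by
    rw [map_smul_eq_mul, Real.norm_of_nonneg hy.le]
  have h_add : y + N y • x = N y • (u + x) := by rw [smul_add, smul_inv_smul₀ hy.ne']
  have h_sub : y - N y • x = N y • (u - x) := by rw [smul_sub, smul_inv_smul₀ hy.ne']
  rw [h_add, h_sub, hscale, hscale, ← mul_add]
  calc N y * (N (u + x) + N (u - x)) ≤ N y * (2 * (1 + K * N x ^ p)) := by gcongr; linarith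
    _ = 2 * N y * (1 + K * N x ^ p) := by ring

theorem modulusOfSmoothnessFor_le_of_add_smul_add_sub_smul_le (hp : 1 ≤ p) (hK : 0 ≤ K)
    (hN : ∀ y x : E, N (y + N y • x) + N (y - N y • x) ≤ 2 * N y * (1 + K * N x ^ p))
    {τ : ℝ} (hτ : 0 < τ) : modulusOfSmoothnessFor N τ ≤ (1 + K) * 2 ^ p * τ ^ p := by
  rw [mul_assoc, ← Real.mul_rpow zero_le_two hτ.le]
  have hτp : 0 ≤ (2 * τ) ^ p := by positivity
  refine Real.sSup_le ?_ (by positivity)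
  rintro _ ⟨u, v, hu, hv, rfl⟩
  rcases lt_or_ge (N u) (1 / 2) with hu₀ | hu₀
  · have : τ - 1 / 2 ≤ (2 * τ) ^ p := by
      rcases le_or_gt 1 (2 * τ) with h | h
      · linarith [Real.self_le_rpow_of_one_le h hp]
      · linarith
    linarith [map_add_le_add N u v, map_sub_le_add N u v, mul_nonneg hK hτp]
  · have hu_pos : 0 < N u := by linarith
    set x := (N u)⁻¹ • v
    have hv_eq : N u • x = v := smul_inv_smul₀ hu_pos.ne' v
    have hx : N x ≤ 2 * τ := by
      rw [map_smul_eq_mul, norm_inv, Real.norm_of_nonneg hu_pos.le, inv_mul_le_iff₀ hu_pos]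
      nlinarith
    have hxp : K * N x ^ p ≤ K * (2 * τ) ^ p := by gcongr
    have hKx : 0 ≤ K * N x ^ p := by positivity
    have := hN u x
    rw [hv_eq] at this
    nlinarith

end Seminorm

section InvariantNorm

variable {G E : Type*} [Group G] [NormedAddCommGroup E] [NormedSpace ℝ E]

theorem map_mul_apply (π : G →* (E ≃L[ℝ] E)) (g h : G) (x : E) : π (g * h) x = π g (π h x) := by
  rw [map_mul]
  rfl

theorem map_apply_map_inv_apply (π : G →* (E ≃L[ℝ] E)) (g : G) (x : E) : π g (π g⁻¹ x) = x := by
  rw [← map_mul_apply, mul_inv_cancel, map_one]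
  rfl

structure Decomposition (π : G →* (E ≃L[ℝ] E)) (x : E) where
  n : ℕ
  g : Fin n → G
  y : Fin n → E
  sum_eq : ∑ i, π (g i) (y i) = x

namespace Decomposition

variable {π : G →* (E ≃L[ℝ] E)} {x x' : E}

def cost (d : Decomposition π x) : ℝ := ∑ i, ‖d.y i‖

theorem cost_nonneg (d : Decomposition π x) : 0 ≤ d.cost :=
  sum_nonneg fun _ _ => norm_nonneg _

variable (π) in
def single (x : E) : Decomposition π x := ⟨1, fun _ => 1, fun _ => x, by simp; rfl⟩

theorem cost_single : (single π x).cost = ‖x‖ := Fin.sum_univ_one _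

instance : Nonempty (Decomposition π x) := ⟨single π x⟩

def add (d : Decomposition π x) (d' : Decomposition π x') : Decomposition π (x + x') where
  n := d.n + d'.n
  g := Fin.append d.g d'.g
  y := Fin.append d.y d'.y
  sum_eq := by simp [Fin.sum_univ_add, d.sum_eq, d'.sum_eq]

theorem cost_add (d : Decomposition π x) (d' : Decomposition π x') :
    (d.add d').cost = d.cost + d'.cost :=
  (Fin.sum_univ_add fun i => ‖Fin.append d.y d'.y i‖).trans (by simp [cost])

def smul (c : ℝ) (d : Decomposition π x) : Decomposition π (c • x) where
  n := d.n
  g := d.g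
  y := c • d.y
  sum_eq := by simp [← d.sum_eq, smul_sum]

theorem cost_smul (c : ℝ) (d : Decomposition π x) : (d.smul c).cost = |c| * d.cost := by
  rw [cost, cost, mul_sum]
  exact sum_congr rfl fun i _ => by rw [← Real.norm_eq_abs, ← norm_smul]; rfl

def map (h : G) (d : Decomposition π x) : Decomposition π (π h x) where
  n := d.n
  g i := h * d.g i
  y := d.y
  sum_eq := by simp only [← d.sum_eq, map_sum, map_mul_apply]

theorem cost_map (h : G) (d : Decomposition π x) : (d.map h).cost = d.cost := rfl

noncomputable def shift (d : Decomposition π x) (hd : d.cost ≠ 0) (v : E) :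
    Decomposition π (x + v) where
  n := d.n
  g := d.g
  y i := d.y i + ‖d.y i‖ • d.cost⁻¹ • π (d.g i)⁻¹ v
  sum_eq := by
    simp only [map_add, map_smul, map_apply_map_inv_apply, sum_add_distrib, d.sum_eq, ← sum_smul]
    rw [← cost, smul_inv_smul₀ hd]

end Decomposition

open Decomposition

variable (π : G →* (E ≃L[ℝ] E))

theorem bddBelow_range_cost (x : E) : BddBelow (Set.range (cost : Decomposition π x → ℝ)) :=
  ⟨0, by rintro _ ⟨d, rfl⟩; exact d.cost_nonneg⟩

noncomputable def invariantNorm : Seminorm ℝ E :=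
  Seminorm.ofSMulLE (fun x => ⨅ d : Decomposition π x, d.cost)
    (le_antisymm ((ciInf_le (bddBelow_range_cost π 0) (single π 0)).trans_eq
      (by rw [cost_single, norm_zero])) (le_ciInf fun d => d.cost_nonneg))
    (fun _ _ => le_ciInf_add_ciInf fun d d' =>
      (ciInf_le (bddBelow_range_cost π _) (d.add d')).trans_eq (cost_add d d'))
    (fun c _ => by
      rw [Real.mul_iInf_of_nonneg (norm_nonneg c)]
      exact le_ciInf fun d => (ciInf_le (bddBelow_range_cost π _) (d.smul c)).trans_eq
        (by rw [cost_smul, Real.norm_eq_abs]))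

variable {π}

theorem invariantNorm_apply (x : E) : invariantNorm π x = ⨅ d : Decomposition π x, d.cost := rfl

theorem invariantNorm_le_cost {x : E} (d : Decomposition π x) : invariantNorm π x ≤ d.cost :=
  ciInf_le (bddBelow_range_cost π x) d

theorem invariantNorm_le_norm (x : E) : invariantNorm π x ≤ ‖x‖ :=
  (invariantNorm_le_cost (single π x)).trans_eq cost_single

theorem norm_le_mul_cost {C : ℝ} (hC : ∀ g : G, ‖(π g : E →L[ℝ] E)‖ ≤ C) {x : E}
    (d : Decomposition π x) : ‖x‖ ≤ C * d.cost := by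
  rw [cost, mul_sum]
  calc ‖x‖ = ‖∑ i, π (d.g i) (d.y i)‖ := by rw [d.sum_eq]
    _ ≤ ∑ i, ‖π (d.g i) (d.y i)‖ := norm_sum_le _ _
    _ ≤ ∑ i, C * ‖d.y i‖ := sum_le_sum fun i _ =>
      ((π (d.g i) : E →L[ℝ] E).le_opNorm (d.y i)).trans (by gcongr; exact hC _)

theorem norm_le_mul_invariantNorm {C : ℝ} (hC : ∀ g : G, ‖(π g : E →L[ℝ] E)‖ ≤ C) (x : E) :
    ‖x‖ ≤ C * invariantNorm π x := by
  rw [invariantNorm_apply, Real.mul_iInf_of_nonneg ((norm_nonneg _).trans (hC 1))]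
  exact le_ciInf (norm_le_mul_cost hC)

theorem invariantNorm_map_le (h : G) (x : E) : invariantNorm π (π h x) ≤ invariantNorm π x :=
  le_ciInf fun d => (invariantNorm_le_cost (d.map h)).trans_eq (cost_map h d)

theorem invariantNorm_map (h : G) (x : E) : invariantNorm π (π h x) = invariantNorm π x := by
  refine le_antisymm (invariantNorm_map_le h x) ?_
  calc invariantNorm π x = invariantNorm π (π h⁻¹ (π h x)) := by
        rw [← map_mul_apply, inv_mul_cancel, map_one]; rfl
    _ ≤ invariantNorm π (π h x) := invariantNorm_map_le h⁻¹ _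

section Smoothness

variable {p K C : ℝ} (hp : 1 ≤ p) (hK : 0 ≤ K) (hC : ∀ g : G, ‖(π g : E →L[ℝ] E)‖ ≤ C)
  (hE : ∀ y z : E, ‖y + ‖y‖ • z‖ + ‖y - ‖y‖ • z‖ ≤ 2 * ‖y‖ * (1 + K * ‖z‖ ^ p))
include hp hK hC hE

theorem invariantNorm_add_smul_add_sub_smul_le_of_decomposition {u : E} (d : Decomposition π u)
    (hu : 0 < invariantNorm π u) (x : E) :
    invariantNorm π (u + invariantNorm π u • x) + invariantNorm π (u - invariantNorm π u • x)
      ≤ 2 * d.cost + 2 * (K * C ^ p * invariantNorm π x ^ p) * invariantNorm π u := by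
  set N := invariantNorm π
  set S := d.cost
  set A := K * C ^ p * N x ^ p
  have hS : 0 < S := hu.trans_le (invariantNorm_le_cost d)
  have hC₀ : 0 ≤ C := (norm_nonneg _).trans (hC 1)
  set v := N u • x
  set z : Fin d.n → E := fun i => S⁻¹ • π (d.g i)⁻¹ v
  have hz : ∀ i, K * ‖z i‖ ^ p ≤ A * (N u / S) := fun i => by
    have h_norm : ‖z i‖ ≤ C * N x * (N u / S) := by
      calc ‖z i‖ ≤ C * N (z i) := norm_le_mul_invariantNorm hC _
        _ = C * N x * (N u / S) := by
          simp only [z, v, map_smul_eq_mul, invariantNorm_map, norm_inv, Real.norm_of_nonneg hS.le,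
            Real.norm_of_nonneg hu.le, N]
          ring
    have h_ratio : (N u / S) ^ p ≤ N u / S := Real.rpow_le_self_of_le_one (by positivity)
      (div_le_one_of_le₀ (invariantNorm_le_cost d) hS.le) hp
    calc K * ‖z i‖ ^ p ≤ K * (C * N x * (N u / S)) ^ p := by gcongr
      _ = A * (N u / S) ^ p := by
          rw [Real.mul_rpow (by positivity) (by positivity), Real.mul_rpow hC₀ (by positivity)]
          ring
      _ ≤ A * (N u / S) := by gcongr
  have h_add : N (u + v) ≤ (d.shift hS.ne' v).cost := invariantNorm_le_cost _
  have h_sub : N (u - v) ≤ (d.shift hS.ne' (-v)).cost := by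
    rw [sub_eq_add_neg]
    exact invariantNorm_le_cost _
  have h_pieces : (d.shift hS.ne' v).cost + (d.shift hS.ne' (-v)).cost
      = ∑ i, (‖d.y i + ‖d.y i‖ • z i‖ + ‖d.y i - ‖d.y i‖ • z i‖) := by
    show ∑ i, ‖d.y i + ‖d.y i‖ • z i‖ + ∑ i, ‖d.y i + ‖d.y i‖ • S⁻¹ • π (d.g i)⁻¹ (-v)‖ = _
    simp only [map_neg, smul_neg, ← sub_eq_add_neg, sum_add_distrib, z]
  calc N (u + v) + N (u - v)
      ≤ ∑ i, (‖d.y i + ‖d.y i‖ • z i‖ + ‖d.y i - ‖d.y i‖ • z i‖) := by linarith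
    _ ≤ ∑ i, 2 * ‖d.y i‖ * (1 + A * (N u / S)) := sum_le_sum fun i _ =>
        (hE _ _).trans <|
          mul_le_mul_of_nonneg_left ((add_le_add_iff_left 1).2 (hz i)) (by positivity)
    _ = 2 * S * (1 + A * (N u / S)) := by rw [← sum_mul, ← mul_sum]; rfl
    _ = 2 * S + 2 * A * N u := by field_simp

theorem invariantNorm_add_smul_add_sub_smul_le (u x : E) :
    invariantNorm π (u + invariantNorm π u • x) + invariantNorm π (u - invariantNorm π u • x)
      ≤ 2 * invariantNorm π u * (1 + K * C ^ p * invariantNorm π x ^ p) := by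
  rcases (apply_nonneg (invariantNorm π) u).eq_or_lt' with hu | hu
  · simp [hu]
  set N := invariantNorm π
  have h_cost : ∀ d : Decomposition π u,
      (N (u + N u • x) + N (u - N u • x)) / 2 - K * C ^ p * N x ^ p * N u ≤ d.cost := fun d => by
    linarith [invariantNorm_add_smul_add_sub_smul_le_of_decomposition hp hK hC hE d hu x]
  have h_inf : _ ≤ N u := le_ciInf h_cost
  linarith

end Smoothness

end InvariantNorm

theorem exists_invariant_uniformly_smooth_norm_general
    {G : Type*} [Group G]
    {E : Type*} [NormedAddCommGroup E] [NormedSpace ℝ E]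
    (p : ℝ) (hp₁ : 1 < p)
    (hsmooth : ∃ K : ℝ, ∀ τ : ℝ, 0 < τ →
      modulusOfSmoothnessFor (fun x : E => ‖x‖) τ ≤ K * τ ^ p)
    (π : G →* (E ≃L[ℝ] E))
    (hπub : ∃ C : ℝ, ∀ g : G, ‖(π g : E →L[ℝ] E)‖ ≤ C) :
    ∃ N : E → ℝ,
      -- `N` is a norm on `E`
      (∀ x : E, 0 ≤ N x) ∧
      (∀ x : E, N x = 0 ↔ x = 0) ∧
      (∀ (c : ℝ) (x : E), N (c • x) = |c| * N x) ∧
      (∀ x y : E, N (x + y) ≤ N x + N y) ∧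
      -- `N` is equivalent to the original norm
      (∃ c₁ c₂ : ℝ, 0 < c₁ ∧ 0 < c₂ ∧ ∀ x : E, c₁ * ‖x‖ ≤ N x ∧ N x ≤ c₂ * ‖x‖) ∧
      -- `N` is `G`-invariant
      (∀ (g : G) (x : E), N (π g x) = N x) ∧
      -- `N` is `p`-uniformly smooth
      (∃ K : ℝ, ∀ τ : ℝ, 0 < τ → modulusOfSmoothnessFor N τ ≤ K * τ ^ p) := by
  obtain ⟨K₀, hK₀⟩ := hsmooth
  obtain ⟨C₀, hC₀⟩ := hπub
  set K := max K₀ 0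
  set C := max C₀ 1
  have hC : ∀ g : G, ‖(π g : E →L[ℝ] E)‖ ≤ C := fun g => (hC₀ g).trans (le_max_left _ _)
  have hC_pos : 0 < C := zero_lt_one.trans_le (le_max_right _ _)
  have h_norm : ∀ y z : E, ‖y + ‖y‖ • z‖ + ‖y - ‖y‖ • z‖ ≤ 2 * ‖y‖ * (1 + K * ‖z‖ ^ p) :=
    (normSeminorm ℝ E).add_smul_add_sub_smul_le_of_modulusOfSmoothnessFor_le (by linarith)
      fun τ hτ => (hK₀ τ hτ).trans (by gcongr; exact le_max_left _ _)
  have h_inv := invariantNorm_add_smul_add_sub_smul_le hp₁.le (le_max_right K₀ 0) hC h_norm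
  refine ⟨invariantNorm π, apply_nonneg _, fun x => ⟨fun h => ?_, fun h => h ▸ map_zero _⟩,
    fun c x => by rw [map_smul_eq_mul, Real.norm_eq_abs], map_add_le_add _,
    ⟨C⁻¹, 1, inv_pos.2 hC_pos, one_pos, fun x => ⟨?_, ?_⟩⟩, invariantNorm_map,
    ⟨_, fun τ hτ => (invariantNorm π).modulusOfSmoothnessFor_le_of_add_smul_add_sub_smul_le
      hp₁.le (by positivity) h_inv hτ⟩⟩
  · simpa [h] using norm_le_mul_invariantNorm hC x
  · rw [inv_mul_le_iff₀ hC_pos]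
    exact norm_le_mul_invariantNorm hC x
  · rw [one_mul]
    exact invariantNorm_le_norm x

/-- Let `G` act on a `p`-uniformly smooth Banach space `E` (`1 < p ≤ 2`) by
uniformly bounded invertible operators, via `π : G → GL(E)` with `sup_g ‖π g‖ < ∞`. Then there
is a norm `N` on `E`, equivalent to the original one, which is `G`-invariant and `p`-uniformly
smooth. -/
theorem exists_invariant_uniformly_smooth_norm
    {G : Type*} [Group G]
    {E : Type*} [NormedAddCommGroup E] [NormedSpace ℝ E] [CompleteSpace E]
    (p : ℝ) (hp₁ : 1 < p) (hp₂ : p ≤ 2)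
    (hsmooth : ∃ K : ℝ, ∀ τ : ℝ, 0 < τ →
      modulusOfSmoothnessFor (fun x : E => ‖x‖) τ ≤ K * τ ^ p)
    (π : G →* (E ≃L[ℝ] E))
    (hπub : ∃ C : ℝ, ∀ g : G, ‖(π g : E →L[ℝ] E)‖ ≤ C) :
    ∃ N : E → ℝ,
      -- `N` is a norm on `E`
      (∀ x : E, 0 ≤ N x) ∧
      (∀ x : E, N x = 0 ↔ x = 0) ∧
      (∀ (c : ℝ) (x : E), N (c • x) = |c| * N x) ∧
      (∀ x y : E, N (x + y) ≤ N x + N y) ∧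
      -- `N` is equivalent to the original norm
      (∃ c₁ c₂ : ℝ, 0 < c₁ ∧ 0 < c₂ ∧ ∀ x : E, c₁ * ‖x‖ ≤ N x ∧ N x ≤ c₂ * ‖x‖) ∧
      -- `N` is `G`-invariant
      (∀ (g : G) (x : E), N (π g x) = N x) ∧
      -- `N` is `p`-uniformly smooth
      (∃ K : ℝ, ∀ τ : ℝ, 0 < τ → modulusOfSmoothnessFor N τ ≤ K * τ ^ p) :=
  exists_invariant_uniformly_smooth_norm_general p hp₁ hsmooth π hπub
end

section
/- Let G be a locally compact, compactly generated topological group with an open, relatively compact, symmetric generating set S (so that the balls {g : |g|_S ≤ n} are relatively compact), and let f, h : G → [0, ∞). Then f ≺ h (i.e. for every ε > 0 there exists a compact subset K ⊆ G such that f(g) ≤ ε h(g) for all g ∉ K) if and only if there exists a measurable nondecreasing map η : [0, ∞) → [0, ∞) with η(x) → ∞ as x → ∞ such that f(g) · η(|g|_S) ≤ h(g) for all g ∈ G. -/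
/-!
Both conditions say that `f ≤ ε h` eventually along a filter. The word-length balls are
relatively compact (they lie in powers of `closure S`) and every compact set is covered by
finitely many of the open sets `S ^ (n + 1)`, so `g ↦ |g|_S` pulls `atTop` back to the cocompact
filter. For the existence of `η`, choose for every `k` a threshold beyond which `k f ≤ h`; a
nondecreasing step function reaching level `k` only after the `k`-th threshold is the required
`η`. Conversely `η ≥ 1/ε` from some length on.
-/

open Pointwise Filter

/-- The word length of `g` with respect to a generating set `S`:
`|g|_S = min {n : g ∈ S^n}` (with `S^0 = {1}`). -/
noncomputable def wordLength {G : Type*} [Group G] (S : Set G) (g : G) : ℕ :=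
  sInf {n : ℕ | g ∈ S ^ n}

open Set

noncomputable def thresholdIndex (m : ℕ → ℝ) (x : ℝ) : ℕ :=
  sSup {k : ℕ | (k : ℝ) ≤ x ∧ m k < x}

section ThresholdIndex

variable (m : ℕ → ℝ)

lemma bddAbove_thresholdIndex_set (x : ℝ) : BddAbove {k : ℕ | (k : ℝ) ≤ x ∧ m k < x} :=
  ⟨⌊x⌋₊, fun _ hk => Nat.le_floor hk.1⟩

lemma thresholdIndex_mono : Monotone (thresholdIndex m) := fun _ y hxy =>
  csSup_le_csSup' (bddAbove_thresholdIndex_set m y)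
    fun _ hk => ⟨hk.1.trans hxy, hk.2.trans_le hxy⟩

lemma le_thresholdIndex {k : ℕ} {x : ℝ} (hk : (k : ℝ) ≤ x) (hm : m k < x) :
    k ≤ thresholdIndex m x :=
  le_csSup (bddAbove_thresholdIndex_set m x) ⟨hk, hm⟩

lemma tendsto_thresholdIndex_atTop : Tendsto (thresholdIndex m) atTop atTop :=
  tendsto_atTop_atTop.2 fun k => ⟨max k (m k + 1), fun _ hx =>
    le_thresholdIndex m (le_of_max_le_left hx) (by linarith [le_of_max_le_right hx])⟩

lemma apply_thresholdIndex_lt {x : ℝ} (hpos : 0 < thresholdIndex m x) :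
    m (thresholdIndex m x) < x := by
  have hne : {k : ℕ | (k : ℝ) ≤ x ∧ m k < x}.Nonempty :=
    nonempty_iff_ne_empty.2 fun he => by simp [thresholdIndex, he] at hpos
  exact (Nat.sSup_mem hne (bddAbove_thresholdIndex_set m x)).2

end ThresholdIndex

section Eta

variable {α : Type*} {w f h : α → ℝ}

lemma exists_eta_of_eventually_le_mul (hh : ∀ a, 0 ≤ h a)
    (hfh : ∀ ε : ℝ, 0 < ε → ∀ᶠ a in comap w atTop, f a ≤ ε * h a) :
    ∃ η : ℝ → ℝ, Measurable η ∧ (∀ x : ℝ, 0 ≤ x → 0 ≤ η x) ∧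
      MonotoneOn η (Ici (0 : ℝ)) ∧ Tendsto η atTop atTop ∧ ∀ a, f a * η (w a) ≤ h a := by
  have hthreshold : ∀ k : ℕ, ∃ M : ℝ, ∀ a, M ≤ w a → f a * k ≤ h a := by
    intro k
    rcases k.eq_zero_or_pos with rfl | hk
    · exact ⟨0, fun a _ => by simpa using hh a⟩
    · have hk' : (0 : ℝ) < k := by exact_mod_cast hk
      obtain ⟨M, hM⟩ :=
        eventually_atTop.1 (eventually_comap.1 (hfh (k : ℝ)⁻¹ (inv_pos.2 hk')))
      refine ⟨M, fun a ha => ?_⟩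
      calc f a * k ≤ (k : ℝ)⁻¹ * h a * k := by gcongr; exact hM (w a) ha a rfl
        _ = h a := by field_simp
  choose m hm using hthreshold
  have hmono : Monotone fun x => (thresholdIndex m x : ℝ) :=
    Nat.mono_cast.comp (thresholdIndex_mono m)
  refine ⟨fun x => thresholdIndex m x, hmono.measurable, fun _ _ => Nat.cast_nonneg _,
    hmono.monotoneOn _, tendsto_natCast_atTop_atTop.comp (tendsto_thresholdIndex_atTop m),
    fun a => ?_⟩
  rcases (thresholdIndex m (w a)).eq_zero_or_pos with h0 | hpos
  · simpa [h0] using hh a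
  · exact hm _ a (apply_thresholdIndex_lt m hpos).le

lemma eventually_le_mul_of_eta (hf : ∀ a, 0 ≤ f a) {η : ℝ → ℝ} (hη : Tendsto η atTop atTop)
    (hfh : ∀ a, f a * η (w a) ≤ h a) {ε : ℝ} (hε : 0 < ε) :
    ∀ᶠ a in comap w atTop, f a ≤ ε * h a := by
  filter_upwards [(hη.comp tendsto_comap).eventually_ge_atTop ε⁻¹] with a ha
  calc f a = ε * (f a * ε⁻¹) := by field_simp
    _ ≤ ε * (f a * η (w a)) :=
      mul_le_mul_of_nonneg_left (mul_le_mul_of_nonneg_left ha (hf a)) hε.le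
    _ ≤ ε * h a := by gcongr; exact hfh a

lemma forall_eventually_le_mul_iff_exists_eta (hf : ∀ a, 0 ≤ f a) (hh : ∀ a, 0 ≤ h a) :
    (∀ ε : ℝ, 0 < ε → ∀ᶠ a in comap w atTop, f a ≤ ε * h a) ↔
    (∃ η : ℝ → ℝ, Measurable η ∧ (∀ x : ℝ, 0 ≤ x → 0 ≤ η x) ∧
      MonotoneOn η (Ici (0 : ℝ)) ∧ Tendsto η atTop atTop ∧ ∀ a, f a * η (w a) ≤ h a) :=
  ⟨exists_eta_of_eventually_le_mul hh, fun ⟨_, _, _, _, hη, hfh⟩ _ hε =>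
    eventually_le_mul_of_eta hf hη hfh hε⟩

end Eta

lemma IsCompact.pow {M : Type*} [Monoid M] [TopologicalSpace M] [ContinuousMul M] {s : Set M}
    (hs : IsCompact s) : ∀ n : ℕ, IsCompact (s ^ n)
  | 0 => by simp
  | n + 1 => pow_succ s n ▸ (hs.pow n).mul hs

section WordLength

variable {G : Type*} [Group G] (S : Set G)

lemma wordLength_le {g : G} {n : ℕ} (hg : g ∈ S ^ n) : wordLength S g ≤ n := Nat.sInf_le hg

lemma mem_pow_wordLength {g : G} (hg : ∃ n : ℕ, g ∈ S ^ n) : g ∈ S ^ wordLength S g :=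
  Nat.sInf_mem hg

variable {S} [TopologicalSpace G] [ContinuousMul G]

lemma IsCompact.exists_wordLength_le (hSopen : IsOpen S) (hSgen : ∀ g : G, ∃ n : ℕ, g ∈ S ^ n)
    {K : Set G} (hK : IsCompact K) : ∃ N : ℕ, ∀ g ∈ K, wordLength S g ≤ N := by
  rcases S.eq_empty_or_nonempty with rfl | ⟨s, hs⟩
  · refine ⟨0, fun g _ => ?_⟩
    obtain ⟨n, hn⟩ := hSgen g
    rcases n.eq_zero_or_pos with rfl | hpos
    · exact wordLength_le _ hn
    · simp [empty_pow hpos.ne'] at hn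
  -- `S ^ 0 = {1}` need not be open, but `1 = s * s⁻¹` also lies in some `S ^ (m + 1)`.
  obtain ⟨m, hm⟩ := hSgen s⁻¹
  have hone : (1 : G) ∈ S ^ (m + 1) := pow_succ' S m ▸ ⟨s, hs, s⁻¹, hm, mul_inv_cancel s⟩
  have hcover : K ⊆ ⋃ n : ℕ, S ^ (n + 1) := fun g _ => by
    obtain ⟨n, hn⟩ := hSgen g
    rcases n with _ | n
    · rw [pow_zero, Set.mem_one] at hn
      exact mem_iUnion.2 ⟨m, hn ▸ hone⟩
    · exact mem_iUnion.2 ⟨n, hn⟩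
  obtain ⟨F, hF⟩ := hK.elim_finite_subcover (fun n : ℕ => S ^ (n + 1))
    (fun n => pow_succ' S n ▸ hSopen.mul_right) hcover
  refine ⟨F.sup id + 1, fun g hg => ?_⟩
  obtain ⟨n, hnF, hgn⟩ := mem_iUnion₂.1 (hF hg)
  exact (wordLength_le S hgn).trans (Nat.succ_le_succ (F.le_sup (f := id) hnF))

lemma tendsto_wordLength_cocompact_atTop (hSrc : IsCompact (closure S))
    (hSgen : ∀ g : G, ∃ n : ℕ, g ∈ S ^ n) : Tendsto (wordLength S) (cocompact G) atTop := by
  refine tendsto_atTop.2 fun N => mem_cocompact.2 ⟨⋃ j ∈ Iio N, closure S ^ j,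
    (finite_Iio N).isCompact_biUnion fun j _ => hSrc.pow j, fun g hg => ?_⟩
  by_contra hlt
  exact hg (mem_biUnion (mem_Iio.2 (not_le.1 hlt))
    (pow_subset_pow_left subset_closure (mem_pow_wordLength S (hSgen g))))

lemma comap_wordLength_atTop (hSopen : IsOpen S) (hSrc : IsCompact (closure S))
    (hSgen : ∀ g : G, ∃ n : ℕ, g ∈ S ^ n) : comap (wordLength S) atTop = cocompact G := by
  refine le_antisymm (hasBasis_cocompact.ge_iff.2 fun K hK => ?_)
    (tendsto_iff_comap.1 (tendsto_wordLength_cocompact_atTop hSrc hSgen))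
  obtain ⟨N, hN⟩ := hK.exists_wordLength_le hSopen hSgen
  exact mem_of_superset (preimage_mem_comap (Ioi_mem_atTop N))
    fun g hg hgK => (hN g hgK).not_gt hg

end WordLength

theorem prec_iff_exists_eta_general
    {G : Type*} [Group G] [TopologicalSpace G] [IsTopologicalGroup G]
    (S : Set G) (hSopen : IsOpen S) (hSrc : IsCompact (closure S))
    (hSgen : ∀ g : G, ∃ n : ℕ, g ∈ S ^ n)
    (f h : G → ℝ) (hf : ∀ g, 0 ≤ f g) (hh : ∀ g, 0 ≤ h g) :
    (∀ ε : ℝ, 0 < ε → ∃ K : Set G, IsCompact K ∧ ∀ g ∉ K, f g ≤ ε * h g) ↔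
    (∃ η : ℝ → ℝ, Measurable η ∧ (∀ x : ℝ, 0 ≤ x → 0 ≤ η x) ∧
      MonotoneOn η (Set.Ici (0 : ℝ)) ∧
      Tendsto η atTop atTop ∧
      ∀ g : G, f g * η (wordLength S g : ℝ) ≤ h g) := by
  have hcomap : comap (fun g => (wordLength S g : ℝ)) atTop = cocompact G := by
    rw [← comap_wordLength_atTop hSopen hSrc hSgen, ← Nat.comap_cast_atTop (R := ℝ),
      comap_comap]
    rfl
  calc _ ↔ ∀ ε : ℝ, 0 < ε → ∀ᶠ g in cocompact G, f g ≤ ε * h g :=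
        forall₂_congr fun _ _ => hasBasis_cocompact.eventually_iff.symm
    _ ↔ _ := hcomap ▸ forall_eventually_le_mul_iff_exists_eta hf hh

/-- Let `G` be a locally compact, compactly generated topological group with
an open, relatively compact, symmetric generating set `S`, and `f, h : G → [0, ∞)`. Then
`f ≺ h` (for every `ε > 0` there is a compact `K ⊆ G` with `f ≤ ε h` off `K`) if and only if
there is a measurable nondecreasing `η : [0,∞) → [0,∞)` with `η(x) → ∞` as `x → ∞` such that
`f(g) · η(|g|_S) ≤ h(g)` for all `g ∈ G`. -/
theorem prec_iff_exists_eta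
    {G : Type*} [Group G] [TopologicalSpace G] [IsTopologicalGroup G] [LocallyCompactSpace G]
    (S : Set G) (hSopen : IsOpen S) (hSrc : IsCompact (closure S)) (hSsymm : S⁻¹ = S)
    (hSgen : ∀ g : G, ∃ n : ℕ, g ∈ S ^ n)
    (f h : G → ℝ) (hf : ∀ g, 0 ≤ f g) (hh : ∀ g, 0 ≤ h g) :
    (∀ ε : ℝ, 0 < ε → ∃ K : Set G, IsCompact K ∧ ∀ g ∉ K, f g ≤ ε * h g) ↔
    (∃ η : ℝ → ℝ, Measurable η ∧ (∀ x : ℝ, 0 ≤ x → 0 ≤ η x) ∧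
      MonotoneOn η (Set.Ici (0 : ℝ)) ∧
      Tendsto η atTop atTop ∧
      ∀ g : G, f g * η (wordLength S g : ℝ) ≤ h g) :=
  prec_iff_exists_eta_general S hSopen hSrc hSgen f h hf hh
end

section
/- Let G be a locally compact, compactly generated topological group, let (π, B) be an isometric representation of G on a Banach space B (a homomorphism into the group of invertible linear isometries of B, continuous in the strong operator topology), and let K ⊆ G be a compact subgroup. Suppose the subspace B^K = {v ∈ B : π(k)v = v for all k ∈ K} of K-fixed vectors is finite dimensional. If (π, B) almost has invariant vectors, then there exists a nonzero vector v ∈ B with π(g)v = v for all g ∈ G. Equivalently, either (π, B) does not have almost invariant vectors, or π contains a nonzero G-invariant vector. -/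
/-!
Let `Q` be a compact generating set. Averaging a unit vector that is almost invariant under
`Q ∪ K` against the Haar probability measure of `K` moves it only a little and makes it
`K`-fixed. So `B^K` contains vectors of norm close to `1` that are almost invariant under `Q`. Since
`B^K` is finite dimensional, its closed annuli are compact, and a limit of such vectors is a
nonzero `Q`-fixed, hence `G`-fixed, vector.
-/

open Pointwise

def fixedSubmodule {G : Type*} [Group G] {B : Type*} [NormedAddCommGroup B] [NormedSpace ℝ B]
    (π : G →* (B ≃L[ℝ] B)) (K : Subgroup G) : Submodule ℝ B where
  carrier := {v : B | ∀ k ∈ K, π k v = v}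
  add_mem' := by
    intro a b ha hb k hk
    simp [map_add, ha k hk, hb k hk]
  zero_mem' := by
    intro k hk
    simp
  smul_mem' := by
    intro c x hx k hk
    simp [map_smul, hx k hk]

open MeasureTheory Metric

theorem IsCompact.exists_forall_nonpos_of_forall_exists_le {X ι : Type*} [TopologicalSpace X]
    [FirstCountableTopology X] {C : Set X} (hC : IsCompact C) (f : ι → X → ℝ)
    (hf : ∀ i, Continuous (f i)) (h : ∀ ε > 0, ∃ x ∈ C, ∀ i, f i x ≤ ε) :
    ∃ x ∈ C, ∀ i, f i x ≤ 0 := by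
  choose x hxC hx using fun n : ℕ => h (1 / (n + 1)) Nat.one_div_pos_of_nat
  obtain ⟨a, haC, φ, hφ, hlim⟩ := hC.tendsto_subseq hxC
  refine ⟨a, haC, fun i => le_of_tendsto_of_tendsto' ((hf i).tendsto a |>.comp hlim)
    (tendsto_one_div_add_atTop_nhds_zero_nat.comp hφ.tendsto_atTop) fun n => hx _ i⟩

theorem norm_integral_sub_le_of_forall_norm_sub_le {α E : Type*} [MeasurableSpace α]
    [NormedAddCommGroup E] [NormedSpace ℝ E] [CompleteSpace E] {μ : Measure α}
    [IsProbabilityMeasure μ]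
    {f : α → E} (hf : Integrable f μ) {u : E} {c : ℝ} (h : ∀ x, ‖f x - u‖ ≤ c) :
    ‖∫ x, f x ∂μ - u‖ ≤ c := by
  calc ‖∫ x, f x ∂μ - u‖ = ‖∫ x, (f x - u) ∂μ‖ := by
        rw [integral_sub hf (integrable_const u), integral_const, probReal_univ, one_smul]
    _ ≤ c * μ.real Set.univ := norm_integral_le_of_norm_le_const (.of_forall h)
    _ = c := by rw [probReal_univ, mul_one]

theorem norm_apply_sub_self_le {E F : Type*} [SeminormedAddCommGroup E] [FunLike F E E]
    [AddMonoidHomClass F E E] (T : F) (hT : ∀ v, ‖T v‖ = ‖v‖) (u w : E) :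
    ‖T w - w‖ ≤ ‖T u - u‖ + 2 * ‖w - u‖ :=
  calc ‖T w - w‖ = ‖T (w - u) + (T u - u) + (u - w)‖ := by rw [map_sub]; abel_nf
    _ ≤ ‖T (w - u)‖ + ‖T u - u‖ + ‖u - w‖ := norm_add₃_le
    _ = ‖T u - u‖ + 2 * ‖w - u‖ := by rw [hT, norm_sub_rev u w]; ring

section Representation

variable {G : Type*} [Group G] {B : Type*} [NormedAddCommGroup B] [NormedSpace ℝ B]

theorem map_integral_apply_eq [MeasurableSpace G] [MeasurableMul G] (μ : Measure G)
    [μ.IsMulLeftInvariant] (ρ : G →* (B ≃L[ℝ] B)) (g : G) (u : B) :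
    ρ g (∫ k, ρ k u ∂μ) = ∫ k, ρ k u ∂μ := by
  have h := integral_mul_left_eq_self (μ := μ) (fun k => ρ k u) g
  simp only [map_mul] at h
  rwa [← ContinuousLinearEquiv.integral_comp_comm]

theorem exists_forall_apply_eq_norm_sub_le_of_compactSpace [TopologicalSpace G]
    [IsTopologicalGroup G] [CompactSpace G] [CompleteSpace B] (ρ : G →* (B ≃L[ℝ] B)) {u : B}
    (hu : Continuous fun g => ρ g u) {c : ℝ} (h : ∀ g, ‖ρ g u - u‖ ≤ c) :
    ∃ w, (∀ g, ρ g w = w) ∧ ‖w - u‖ ≤ c := by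
  borelize G
  let μ : Measure G := Measure.haarMeasure ⊤
  have : IsProbabilityMeasure μ := ⟨by simpa using Measure.haarMeasure_self (G := G) (K₀ := ⊤)⟩
  exact ⟨∫ g, ρ g u ∂μ, (map_integral_apply_eq μ ρ · u),
    norm_integral_sub_le_of_forall_norm_sub_le (hu.integrable_of_hasCompactSupport
      (.of_compactSpace _)) h⟩

theorem forall_apply_eq_of_forall_mem_pow (ρ : G →* (B ≃L[ℝ] B)) {Q : Set G}
    (hQ : ∀ g : G, ∃ n : ℕ, g ∈ Q ^ n) {v : B} (hv : ∀ g ∈ Q, ρ g v = v) (g : G) :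
    ρ g v = v := by
  let S : Submonoid G :=
    { carrier := {g | ρ g v = v}
      one_mem' := by rw [Set.mem_ofPred_eq, map_one]; rfl
      mul_mem' := fun {a b} (ha : ρ a v = v) (hb : ρ b v = v) =>
        show ρ (a * b) v = v by rw [map_mul]; exact (congrArg (ρ a) hb).trans ha }
  obtain ⟨n, hn⟩ := hQ g
  exact Submonoid.pow_subset (S := S) hv hn

theorem exists_norm_eq_one_forall_norm_apply_sub_lt (ρ : G →* (B ≃L[ℝ] B)) {S : Set G} {ε : ℝ}
    (h : ∃ v : B, v ≠ 0 ∧ ∀ g ∈ S, ‖ρ g v - v‖ < ε * ‖v‖) :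
    ∃ u : B, ‖u‖ = 1 ∧ ∀ g ∈ S, ‖ρ g u - u‖ < ε := by
  obtain ⟨v, hv0, hv⟩ := h
  have hv_pos : 0 < ‖v‖ := norm_pos_iff.2 hv0
  refine ⟨‖v‖⁻¹ • v, norm_smul_inv_norm hv0, fun g hg => ?_⟩
  rw [map_smul, ← smul_sub, norm_smul, norm_inv, norm_norm, inv_mul_lt_iff₀ hv_pos, mul_comm]
  exact hv g hg

theorem exists_mem_fixedSubmodule_forall_norm_apply_sub_le [TopologicalSpace G]
    [IsTopologicalGroup G] [CompleteSpace B] (π : G →* (B ≃L[ℝ] B))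
    (hπiso : ∀ (g : G) (v : B), ‖π g v‖ = ‖v‖) (hπcont : ∀ v : B, Continuous fun g : G => π g v)
    {K : Subgroup G} (hK : IsCompact (K : Set G))
    (hai : ∀ Q : Set G, IsCompact Q → ∀ ε : ℝ, 0 < ε →
      ∃ v : B, v ≠ 0 ∧ ∀ g ∈ Q, ‖π g v - v‖ < ε * ‖v‖)
    {Q : Set G} (hQ : IsCompact Q) {ε : ℝ} (hε : 0 < ε) :
    ∃ w ∈ fixedSubmodule π K, ‖w‖ ∈ Set.Icc (1 / 2 : ℝ) 2 ∧ ∀ g ∈ Q, ‖π g w - w‖ ≤ ε := by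
  set δ := min (ε / 3) (1 / 2)
  have hδ : δ ≤ ε / 3 ∧ δ ≤ 1 / 2 := ⟨min_le_left _ _, min_le_right _ _⟩
  obtain ⟨u, hu_norm, hu⟩ :=
    exists_norm_eq_one_forall_norm_apply_sub_lt π (hai _ (hQ.union hK) δ (by positivity))
  have : CompactSpace K := isCompact_iff_compactSpace.mp hK
  obtain ⟨w, hwK, hwu⟩ := exists_forall_apply_eq_norm_sub_le_of_compactSpace (π.comp K.subtype)
    ((hπcont u).comp continuous_subtype_val) fun k => (hu k (Or.inr k.2)).le
  refine ⟨w, fun k hk => hwK ⟨k, hk⟩, ⟨?_, ?_⟩, fun g hg => ?_⟩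
  · linarith [norm_sub_norm_le u w, norm_sub_rev u w]
  · linarith [norm_sub_norm_le w u]
  · linarith [norm_apply_sub_self_le (π g) (hπiso g) u w, hu g (Or.inl hg)]

end Representation

theorem exists_invariant_vector_of_almost_invariant_general
    {G : Type*} [Group G] [TopologicalSpace G] [IsTopologicalGroup G]
    {B : Type*} [NormedAddCommGroup B] [NormedSpace ℝ B] [CompleteSpace B]
    (hcg : ∃ Q : Set G, IsCompact Q ∧ Q⁻¹ = Q ∧ ∀ g : G, ∃ n : ℕ, g ∈ Q ^ n)
    (π : G →* (B ≃L[ℝ] B))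
    (hπiso : ∀ (g : G) (v : B), ‖π g v‖ = ‖v‖)
    (hπcont : ∀ v : B, Continuous fun g : G => π g v)
    (K : Subgroup G) (hK : IsCompact (K : Set G))
    (hfd : FiniteDimensional ℝ (fixedSubmodule π K))
    (hai : ∀ Q : Set G, IsCompact Q → ∀ ε : ℝ, 0 < ε →
      ∃ v : B, v ≠ 0 ∧ ∀ g ∈ Q, ‖π g v - v‖ < ε * ‖v‖) :
    ∃ v : B, v ≠ 0 ∧ ∀ g : G, π g v = v := by
  obtain ⟨Q, hQ, -, hQgen⟩ := hcg
  have : ProperSpace (fixedSubmodule π K) := FiniteDimensional.proper ℝ _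
  have hC : IsCompact {w : fixedSubmodule π K | ‖w‖ ∈ Set.Icc (1 / 2 : ℝ) 2} :=
    (isCompact_closedBall 0 2).of_isClosed_subset (isClosed_Icc.preimage continuous_norm)
      fun w hw => mem_closedBall_zero_iff.2 hw.2
  obtain ⟨w, hw_norm, hwQ⟩ := hC.exists_forall_nonpos_of_forall_exists_le
    (fun (g : Q) (w : fixedSubmodule π K) => ‖π g w - w‖) (fun g => by fun_prop) fun ε hε => by
      obtain ⟨w, hwK, hw_norm, hwQ⟩ :=
        exists_mem_fixedSubmodule_forall_norm_apply_sub_le π hπiso hπcont hK hai hQ hε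
      exact ⟨⟨w, hwK⟩, hw_norm, fun g => hwQ g g.2⟩
  refine ⟨w, fun h => ?_, forall_apply_eq_of_forall_mem_pow π hQgen fun g hg => ?_⟩
  · norm_num [Submodule.coe_norm, h] at hw_norm
  · simpa [sub_eq_zero] using hwQ ⟨g, hg⟩

/-- Let `G` be a locally compact, compactly generated topological group,
`(π, B)` an isometric representation of `G` on a Banach space `B` (continuous in the strong
operator topology), and `K ⊆ G` a compact subgroup such that the space `B^K` of `K`-fixed
vectors is finite dimensional. If `(π, B)` almost has invariant vectors, then there exists a
nonzero `G`-invariant vector. -/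
theorem exists_invariant_vector_of_almost_invariant
    {G : Type*} [Group G] [TopologicalSpace G] [IsTopologicalGroup G] [LocallyCompactSpace G]
    {B : Type*} [NormedAddCommGroup B] [NormedSpace ℝ B] [CompleteSpace B]
    (hcg : ∃ Q : Set G, IsCompact Q ∧ Q⁻¹ = Q ∧ ∀ g : G, ∃ n : ℕ, g ∈ Q ^ n)
    (π : G →* (B ≃L[ℝ] B))
    (hπiso : ∀ (g : G) (v : B), ‖π g v‖ = ‖v‖)
    (hπcont : ∀ v : B, Continuous fun g : G => π g v)
    (K : Subgroup G) (hK : IsCompact (K : Set G))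
    (hfd : FiniteDimensional ℝ (fixedSubmodule π K))
    (hai : ∀ Q : Set G, IsCompact Q → ∀ ε : ℝ, 0 < ε →
      ∃ v : B, v ≠ 0 ∧ ∀ g ∈ Q, ‖π g v - v‖ < ε * ‖v‖) :
    ∃ v : B, v ≠ 0 ∧ ∀ g : G, π g v = v :=
  exists_invariant_vector_of_almost_invariant_general hcg π hπiso hπcont K hK hfd hai
end

section
/- Let m₁, m₂ ≥ 0 be real numbers with m₁ + 2m₂ > 0, and define f : (0, ∞) → (0, ∞) by f(r) = (sinh r)^{m₁} (sinh 2r)^{m₂}. Let η : (0, ∞) → [0, ∞) be continuous and bounded. Then limsup_{r→∞} (1/f(r)) ∫₀^r η(s) f(s) ds ≤ (limsup_{s→∞} η(s)) / (m₁ + 2m₂), and liminf_{r→∞} (1/f(r)) ∫₀^r η(s) f(s) ds ≥ (liminf_{s→∞} η(s)) / (m₁ + 2m₂). -/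
open Filter MeasureTheory Set Topology Real

/-!
Write `G r = ∫₀^r η f`, so that `G' = η f` and `f' = g f` with
`g = m₁ coth r + 2 m₂ coth 2r → M := m₁ + 2 m₂`. The statement is then a one-sided
L'Hôpital rule for `G / f`: if `η < b g` on `[R, ∞)`, then `G - b f` is antitone there, hence
`G / f ≤ b + O(1 / f)`, and `f → ∞` gives `limsup G / f ≤ b`. Since `b g → b M`, any
`b > limsup η / M` qualifies; the `liminf` bound is symmetric.
-/

section Averages

variable {F G F' G' : ℝ → ℝ}

theorem eventually_div_lt_of_hasDerivAt_le {b c : ℝ} (hF : Tendsto F atTop atTop) (hbc : b < c)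
    (hFd : ∀ᶠ x in atTop, HasDerivAt F (F' x) x) (hGd : ∀ᶠ x in atTop, HasDerivAt G (G' x) x)
    (hle : ∀ᶠ x in atTop, G' x ≤ b * F' x) :
    ∀ᶠ r in atTop, G r / F r < c := by
  obtain ⟨R, hR⟩ := eventually_atTop.1 (hFd.and (hGd.and hle))
  have hderiv : ∀ x ≥ R, HasDerivAt (fun x => G x - b * F x) (G' x - b * F' x) x :=
    fun x hx => (hR x hx).2.1.sub ((hR x hx).1.const_mul b)
  have hanti : AntitoneOn (fun x => G x - b * F x) (Ici R) := by
    refine antitoneOn_of_hasDerivWithinAt_nonpos (f' := fun x => G' x - b * F' x) (convex_Ici R)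
      (fun x hx => (hderiv x hx).continuousAt.continuousWithinAt) (fun x hx => ?_) (fun x hx => ?_)
    · rw [interior_Ici] at hx
      exact (hderiv x (le_of_lt hx)).hasDerivWithinAt
    · rw [interior_Ici] at hx
      linarith [(hR x (le_of_lt hx)).2.2]
  have hrem : Tendsto (fun r => (G R - b * F R) / F r) atTop (𝓝 0) :=
    tendsto_const_nhds.div_atTop hF
  filter_upwards [eventually_ge_atTop R, hF.eventually_gt_atTop 0,
    hrem.eventually (gt_mem_nhds (sub_pos.2 hbc))] with r hRr hFr hsmall
  have hGr : G r ≤ b * F r + (G R - b * F R) := by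
    linarith [hanti self_mem_Ici hRr hRr]
  calc G r / F r ≤ (b * F r + (G R - b * F R)) / F r := by gcongr
    _ = b + (G R - b * F R) / F r := by field_simp
    _ < c := by linarith

theorem eventually_lt_div_of_le_hasDerivAt {b c : ℝ} (hF : Tendsto F atTop atTop) (hcb : c < b)
    (hFd : ∀ᶠ x in atTop, HasDerivAt F (F' x) x) (hGd : ∀ᶠ x in atTop, HasDerivAt G (G' x) x)
    (hle : ∀ᶠ x in atTop, b * F' x ≤ G' x) :
    ∀ᶠ r in atTop, c < G r / F r := by
  have := eventually_div_lt_of_hasDerivAt_le (G := fun x => -G x) (G' := fun x => -G' x)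
    hF (neg_lt_neg hcb) hFd (hGd.mono fun x hx => hx.neg) (hle.mono fun x hx => by linarith)
  filter_upwards [this] with r hr
  rw [neg_div] at hr
  linarith

end Averages

theorem Filter.eventually_lt_of_limsup_lt_of_tendsto {α : Type*} {l : Filter α} {u v : α → ℝ}
    {m : ℝ} (hv : Tendsto v l (𝓝 m)) (h : limsup u l < m)
    (hu : IsBoundedUnder (· ≤ ·) l u) : ∀ᶠ x in l, u x < v x := by
  obtain ⟨d, hud, hdm⟩ := exists_between h
  filter_upwards [eventually_lt_of_limsup_lt hud hu, hv.eventually (lt_mem_nhds hdm)]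
    with x hux hvx using hux.trans hvx

theorem Filter.eventually_lt_of_tendsto_lt_liminf {α : Type*} {l : Filter α} {u v : α → ℝ}
    {m : ℝ} (hv : Tendsto v l (𝓝 m)) (h : m < liminf u l)
    (hu : IsBoundedUnder (· ≥ ·) l u) : ∀ᶠ x in l, v x < u x := by
  obtain ⟨d, hmd, hdu⟩ := exists_between h
  filter_upwards [eventually_lt_of_lt_liminf hdu hu, hv.eventually (gt_mem_nhds hmd)]
    with x hux hvx using hvx.trans hux

theorem limsup_div_le_and_le_liminf_div {F G g η : ℝ → ℝ} {M : ℝ} (hM : 0 < M)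
    (hF : Tendsto F atTop atTop) (hg : Tendsto g atTop (𝓝 M))
    (hFd : ∀ᶠ x in atTop, HasDerivAt F (F x * g x) x)
    (hGd : ∀ᶠ x in atTop, HasDerivAt G (η x * F x) x)
    (hη_le : IsBoundedUnder (· ≤ ·) atTop η) (hη_ge : IsBoundedUnder (· ≥ ·) atTop η) :
    limsup (fun r => G r / F r) atTop ≤ limsup η atTop / M ∧
      liminf η atTop / M ≤ liminf (fun r => G r / F r) atTop := by
  have hFpos : ∀ᶠ x in atTop, 0 < F x := hF.eventually_gt_atTop 0
  have upper : ∀ c > limsup η atTop / M, ∀ᶠ r in atTop, G r / F r < c := by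
    intro c hc
    obtain ⟨b, hb, hbc⟩ := exists_between hc
    rw [div_lt_iff₀ hM] at hb
    refine eventually_div_lt_of_hasDerivAt_le hF hbc hFd hGd ?_
    filter_upwards [eventually_lt_of_limsup_lt_of_tendsto (hg.const_mul b) hb hη_le, hFpos]
      with x hx hFx
    nlinarith
  have lower : ∀ c < liminf η atTop / M, ∀ᶠ r in atTop, c < G r / F r := by
    intro c hc
    obtain ⟨b, hcb, hb⟩ := exists_between hc
    rw [lt_div_iff₀ hM] at hb
    refine eventually_lt_div_of_le_hasDerivAt hF hcb hFd hGd ?_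
    filter_upwards [eventually_lt_of_tendsto_lt_liminf (hg.const_mul b) hb hη_ge, hFpos]
      with x hx hFx
    nlinarith
  have hbdd_ge : IsBoundedUnder (· ≥ ·) atTop (fun r => G r / F r) :=
    isBoundedUnder_of_eventually_ge ((lower _ (sub_one_lt _)).mono fun _ => le_of_lt)
  have hbdd_le : IsBoundedUnder (· ≤ ·) atTop (fun r => G r / F r) :=
    isBoundedUnder_of_eventually_le ((upper _ (lt_add_one _)).mono fun _ => le_of_lt)
  exact ⟨(limsup_le_iff hbdd_ge.isCoboundedUnder_le hbdd_le).2 upper,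
    (le_liminf_iff hbdd_le.isCoboundedUnder_ge hbdd_ge).2 lower⟩

theorem integrableOn_Ioc_mul_of_bounded {η f : ℝ → ℝ} {a b C : ℝ} (hf : Continuous f)
    (hη : ContinuousOn η (Ioc a b)) (hηC : ∀ s ∈ Ioc a b, ‖η s‖ ≤ C) :
    IntegrableOn (fun s => η s * f s) (Ioc a b) := by
  obtain ⟨B, hB⟩ := (isCompact_Icc (a := a) (b := b)).exists_bound_of_continuousOn hf.continuousOn
  refine Integrable.of_bound ((hη.mul hf.continuousOn).aestronglyMeasurable measurableSet_Ioc)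
    (C * B) ((ae_restrict_iff' measurableSet_Ioc).2 (Eventually.of_forall fun s hs => ?_))
  rw [norm_mul]
  exact mul_le_mul (hηC s hs) (hB s (Ioc_subset_Icc_self hs)) (norm_nonneg _)
    ((norm_nonneg _).trans (hηC s hs))

theorem hasDerivAt_setIntegral_Ioo {h : ℝ → ℝ} {a x : ℝ} (hx : a < x)
    (hint : IntegrableOn h (Ioc a x)) (hc : ContinuousOn h (Ioi a)) :
    HasDerivAt (fun r => ∫ s in Ioo a r, h s) (h x) x := by
  have hderiv := intervalIntegral.integral_hasDerivAt_right
    ((intervalIntegrable_iff_integrableOn_Ioc_of_le hx.le).2 hint)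
    (hc.stronglyMeasurableAtFilter isOpen_Ioi x hx) (hc.continuousAt (Ioi_mem_nhds hx))
  refine hderiv.congr_of_eventuallyEq ?_
  filter_upwards [Ioi_mem_nhds hx] with r hr
  rw [intervalIntegral.integral_of_le (le_of_lt hr), integral_Ioc_eq_integral_Ioo]

theorem tendsto_sinh_atTop : Tendsto sinh atTop atTop :=
  tendsto_atTop_mono' atTop ((eventually_ge_atTop 0).mono fun _ hr => self_le_sinh_iff.2 hr)
    tendsto_id

theorem tendsto_cosh_div_sinh_atTop : Tendsto (fun r => cosh r / sinh r) atTop (𝓝 1) := by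
  have hsmall : Tendsto (fun r => exp (-r) / sinh r) atTop (𝓝 0) :=
    tendsto_exp_neg_atTop_nhds_zero.div_atTop tendsto_sinh_atTop
  have hlim : Tendsto (fun r => 1 + exp (-r) / sinh r) atTop (𝓝 1) := by
    simpa using hsmall.const_add 1
  refine Tendsto.congr' ?_ hlim
  filter_upwards [eventually_gt_atTop 0] with r hr
  have := (sinh_pos_iff.2 hr).ne'
  rw [← cosh_sub_sinh]
  field_simp
  ring

noncomputable def sinhWeight (m₁ m₂ r : ℝ) : ℝ := sinh r ^ m₁ * sinh (2 * r) ^ m₂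

noncomputable def sinhWeightLogDeriv (m₁ m₂ r : ℝ) : ℝ :=
  m₁ * (cosh r / sinh r) + 2 * m₂ * (cosh (2 * r) / sinh (2 * r))

section SinhWeight

variable {m₁ m₂ : ℝ}

theorem continuous_sinhWeight (hm₁ : 0 ≤ m₁) (hm₂ : 0 ≤ m₂) : Continuous (sinhWeight m₁ m₂) :=
  ((continuous_rpow_const hm₁).comp continuous_sinh).mul
    ((continuous_rpow_const hm₂).comp (continuous_sinh.comp (continuous_const_mul 2)))

theorem hasDerivAt_sinhWeight {r : ℝ} (hr : 0 < r) :
    HasDerivAt (sinhWeight m₁ m₂) (sinhWeight m₁ m₂ r * sinhWeightLogDeriv m₁ m₂ r) r := by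
  have hs : sinh r ≠ 0 := (sinh_pos_iff.2 hr).ne'
  have hs₂ : sinh (2 * r) ≠ 0 := (sinh_pos_iff.2 (by linarith)).ne'
  have h₁ := (hasDerivAt_sinh r).rpow_const (p := m₁) (Or.inl hs)
  have h₂ := ((hasDerivAt_sinh (2 * r)).comp r ((hasDerivAt_id r).const_mul 2)).rpow_const
    (p := m₂) (Or.inl hs₂)
  refine (h₁.mul h₂).congr_deriv ?_
  simp only [sinhWeight, sinhWeightLogDeriv, Function.comp, rpow_sub_one hs, rpow_sub_one hs₂]
  field_simp

theorem tendsto_sinhWeightLogDeriv (m₁ m₂ : ℝ) :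
    Tendsto (sinhWeightLogDeriv m₁ m₂) atTop (𝓝 (m₁ + 2 * m₂)) := by
  have h₂ := tendsto_cosh_div_sinh_atTop.comp (tendsto_id.const_mul_atTop two_pos)
  unfold sinhWeightLogDeriv
  simpa using (tendsto_cosh_div_sinh_atTop.const_mul m₁).add (h₂.const_mul (2 * m₂))

theorem tendsto_sinhWeight_atTop (hm₁ : 0 ≤ m₁) (hm₂ : 0 ≤ m₂) (hm : 0 < m₁ + 2 * m₂) :
    Tendsto (sinhWeight m₁ m₂) atTop atTop := by
  refine tendsto_atTop_mono' atTop ?_ ((tendsto_rpow_atTop (by linarith : 0 < m₁ + m₂)).comp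
    tendsto_sinh_atTop)
  filter_upwards [eventually_gt_atTop 0] with r hr
  have hs := sinh_pos_iff.2 hr
  calc sinh r ^ (m₁ + m₂) = sinh r ^ m₁ * sinh r ^ m₂ := rpow_add hs _ _
    _ ≤ sinhWeight m₁ m₂ r := by
      unfold sinhWeight
      gcongr
      exact sinh_le_sinh.2 (by linarith)

end SinhWeight

/-- Let `m₁, m₂ ≥ 0` with `m₁ + 2m₂ > 0` and
`f(r) = (sinh r)^{m₁} (sinh 2r)^{m₂}`. Let `η : (0,∞) → [0,∞)` be continuous and bounded.
Then `limsup_{r→∞} (1/f r) ∫₀^r η f ≤ (limsup η) / (m₁ + 2m₂)` and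
`liminf_{r→∞} (1/f r) ∫₀^r η f ≥ (liminf η) / (m₁ + 2m₂)`. -/
theorem limsup_liminf_average_against_sinh_weight
    (m₁ m₂ : ℝ) (hm₁ : 0 ≤ m₁) (hm₂ : 0 ≤ m₂) (hm : 0 < m₁ + 2 * m₂)
    (f : ℝ → ℝ) (hf : ∀ r : ℝ, f r = Real.sinh r ^ m₁ * Real.sinh (2 * r) ^ m₂)
    (η : ℝ → ℝ) (hηcont : ContinuousOn η (Set.Ioi (0 : ℝ)))
    (hηnn : ∀ s : ℝ, 0 < s → 0 ≤ η s)
    (hηbdd : ∃ C : ℝ, ∀ s : ℝ, 0 < s → η s ≤ C) :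
    limsup (fun r : ℝ => (1 / f r) * ∫ s in Set.Ioo (0 : ℝ) r, η s * f s) atTop ≤
        limsup η atTop / (m₁ + 2 * m₂) ∧
      liminf η atTop / (m₁ + 2 * m₂) ≤
        liminf (fun r : ℝ => (1 / f r) * ∫ s in Set.Ioo (0 : ℝ) r, η s * f s) atTop := by
  obtain rfl : f = sinhWeight m₁ m₂ := funext hf
  obtain ⟨C, hC⟩ := hηbdd
  have hcont := continuous_sinhWeight hm₁ hm₂
  have hG : ∀ᶠ x in atTop, HasDerivAt (fun r => ∫ s in Ioo 0 r, η s * sinhWeight m₁ m₂ s)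
      (η x * sinhWeight m₁ m₂ x) x := by
    filter_upwards [eventually_gt_atTop 0] with x hx
    refine hasDerivAt_setIntegral_Ioo hx (integrableOn_Ioc_mul_of_bounded (C := C) hcont
      (hηcont.mono Ioc_subset_Ioi_self) fun s hs => ?_) (hηcont.mul hcont.continuousOn)
    rw [norm_of_nonneg (hηnn s hs.1)]
    exact hC s hs.1
  simp only [one_div_mul_eq_div]
  exact limsup_div_le_and_le_liminf_div hm (tendsto_sinhWeight_atTop hm₁ hm₂ hm)
    (tendsto_sinhWeightLogDeriv m₁ m₂)
    ((eventually_gt_atTop 0).mono fun x hx => hasDerivAt_sinhWeight hx) hG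
    (isBoundedUnder_of_eventually_le ((eventually_gt_atTop 0).mono hC))
    (isBoundedUnder_of_eventually_ge ((eventually_gt_atTop 0).mono hηnn))
end

section
/- Let m₁, m₂ ≥ 0 be real numbers with m₁ + 2m₂ > 0, and define f(r) = (sinh r)^{m₁} (sinh 2r)^{m₂} for r > 0. Let η : (0, ∞) → ℝ be continuous with 0 < c₁ ≤ η(s) ≤ c₂ for all s > 0, and define ψ(r) = (2/f(r)) ∫₀^r η(s) f(s) ds and φ(r) = ∫₀^r ψ(t) dt. Then liminf_{r→∞} φ(r)/r ≥ 2c₁/(m₁ + 2m₂) and limsup_{r→∞} φ(r)/r ≤ 2c₂/(m₁ + 2m₂); in particular φ(r) ≍ r as r → ∞, i.e. there exist constants 0 < a ≤ b and R > 0 such that a·r ≤ φ(r) ≤ b·r for all r ≥ R. (Note that ψ is the particular solution, obtained by variation of constants, of the equation ψ'(r) + (m₁ coth r + 2 m₂ coth 2r) ψ(r) = 2η(r).) -/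
/-!
Put `K = m₁ + 2m₂`. Since `sinh r = eʳ (1 - e^{-2r})/2`, the weight is `f(r) = e^{Kr} P(r)` with `P`
positive, nondecreasing and `P(r) → 2^{-(m₁+m₂)}`. Freezing `P` at `r` gives
`∫₀^r η f ≤ c₂ f(r)/K`, i.e. `ψ ≤ 2c₂/K` everywhere; freezing it at a large `s₀` gives
`∫₀^r η f ≥ c₁ P(s₀)(e^{Kr} - e^{Ks₀})/K`, so `ψ` is eventually above every number below `2c₁/K`.
Integrating these two bounds on `ψ` gives the bounds on `φ(r)/r`.
-/

open Filter MeasureTheory Set Topology Real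

theorem integral_Ioo_exp_mul {K a b : ℝ} (hK : K ≠ 0) (hab : a ≤ b) :
    ∫ s in Ioo a b, exp (K * s) = (exp (K * b) - exp (K * a)) / K := by
  rw [← integral_Ioc_eq_integral_Ioo, ← intervalIntegral.integral_of_le hab,
    intervalIntegral.integral_comp_mul_left exp hK, integral_exp, smul_eq_mul]
  field_simp

theorem integrableOn_exp_const_mul (K a b : ℝ) : IntegrableOn (fun s => exp (K * s)) (Ioo a b) :=
  (continuous_exp.comp (continuous_const_mul K)).integrableOn_Icc.mono_set Ioo_subset_Icc_self

theorem setIntegral_Ioo_mono {g : ℝ → ℝ} {a a' b b' : ℝ} (ha : a' ≤ a) (hb : b ≤ b')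
    (hg : ∀ s ∈ Ioo a' b', 0 ≤ g s) (hint : IntegrableOn g (Ioo a' b')) :
    ∫ s in Ioo a b, g s ≤ ∫ s in Ioo a' b', g s :=
  setIntegral_mono_set hint ((ae_restrict_iff' measurableSet_Ioo).2 (Eventually.of_forall hg))
    (Ioo_subset_Ioo ha hb).eventuallyLE

theorem setIntegral_Ioo_zero_le_mul {ψ : ℝ → ℝ} {M r : ℝ} (hψ : ∀ t, ψ t ≤ M)
    (hint : IntegrableOn ψ (Ioo 0 r)) (hr : 0 ≤ r) : ∫ t in Ioo 0 r, ψ t ≤ M * r := by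
  calc ∫ t in Ioo 0 r, ψ t ≤ ∫ _ in Ioo 0 r, M :=
        setIntegral_mono_on hint (integrableOn_const measure_Ioo_lt_top.ne) measurableSet_Ioo
          fun t _ => hψ t
    _ = M * r := by simp [Real.volume_real_Ioo_of_le hr, mul_comm]

theorem eventually_mul_le_setIntegral_Ioo {ψ : ℝ → ℝ} {A : ℝ} (hψ : ∀ t, 0 < t → 0 ≤ ψ t)
    (hint : ∀ r, IntegrableOn ψ (Ioo 0 r)) (h : ∀ B < A, ∀ᶠ t in atTop, B ≤ ψ t) :
    ∀ B < A, ∀ᶠ r in atTop, B * r ≤ ∫ t in Ioo 0 r, ψ t := by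
  intro B hB
  obtain ⟨B', hBB', hB'A⟩ := exists_between hB
  obtain ⟨t₀, ht₀⟩ := eventually_atTop.1 (h B' hB'A)
  set r₀ := max t₀ 0
  filter_upwards [eventually_ge_atTop r₀, eventually_ge_atTop (B' * r₀ / (B' - B))]
    with r hr hr'
  rw [div_le_iff₀ (sub_pos.2 hBB')] at hr'
  calc B * r ≤ ∫ _ in Ioo r₀ r, B' := by
        rw [setIntegral_const, Real.volume_real_Ioo_of_le hr, smul_eq_mul]; linarith
    _ ≤ ∫ t in Ioo r₀ r, ψ t :=
        setIntegral_mono_on (integrableOn_const measure_Ioo_lt_top.ne)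
          ((hint r).mono_set (Ioo_subset_Ioo_left (le_max_right _ _))) measurableSet_Ioo
          fun t ht => ht₀ t ((le_max_left _ _).trans ht.1.le)
    _ ≤ ∫ t in Ioo 0 r, ψ t :=
        setIntegral_Ioo_mono (le_max_right _ _) le_rfl (fun t ht => hψ t ht.1) (hint r)

theorem le_liminf_div_self {φ : ℝ → ℝ} {A M : ℝ} (hA : ∀ B < A, ∀ᶠ r in atTop, B * r ≤ φ r)
    (hM : ∀ᶠ r in atTop, φ r ≤ M * r) : A ≤ liminf (fun r => φ r / r) atTop := by
  have hM' : ∀ᶠ r in atTop, φ r / r ≤ M := by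
    filter_upwards [hM, eventually_gt_atTop 0] with r h hr
    rwa [div_le_iff₀ hr]
  refine le_of_forall_lt_imp_le_of_dense fun B hB => ?_
  refine le_liminf_of_le (isCoboundedUnder_ge_of_eventually_le atTop hM') ?_
  filter_upwards [hA B hB, eventually_gt_atTop 0] with r h hr
  rwa [le_div_iff₀ hr]

theorem limsup_div_self_le {φ : ℝ → ℝ} {B M : ℝ} (hB : ∀ᶠ r in atTop, B * r ≤ φ r)
    (hM : ∀ᶠ r in atTop, φ r ≤ M * r) : limsup (fun r => φ r / r) atTop ≤ M := by
  have hB' : ∀ᶠ r in atTop, B ≤ φ r / r := by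
    filter_upwards [hB, eventually_gt_atTop 0] with r h hr
    rwa [le_div_iff₀ hr]
  refine limsup_le_of_le (isCoboundedUnder_le_of_eventually_le atTop hB') ?_
  filter_upwards [hM, eventually_gt_atTop 0] with r h hr
  rwa [div_le_iff₀ hr]

structure IsExpMulMonotone (K : ℝ) (u w : ℝ → ℝ) : Prop where
  eq_exp_mul : ∀ r, 0 < r → w r = exp (K * r) * u r
  pos : ∀ r, 0 < r → 0 < u r
  monotoneOn : MonotoneOn u (Ioi 0)

namespace IsExpMulMonotone

variable {K C r s : ℝ} {u w : ℝ → ℝ}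

theorem weight_pos (hw : IsExpMulMonotone K u w) (hr : 0 < r) : 0 < w r := by
  rw [hw.eq_exp_mul r hr]
  exact mul_pos (exp_pos _) (hw.pos r hr)

theorem le_exp_mul (hw : IsExpMulMonotone K u w) (hs : 0 < s) (hsr : s ≤ r) :
    w s ≤ exp (K * s) * u r := by
  rw [hw.eq_exp_mul s hs]
  gcongr
  exact hw.monotoneOn hs (hs.trans_le hsr) hsr

theorem exp_mul_le (hw : IsExpMulMonotone K u w) (hs : 0 < s) (hsr : s ≤ r) :
    exp (K * r) * u s ≤ w r := by
  rw [hw.eq_exp_mul r (hs.trans_le hsr)]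
  gcongr
  exact hw.monotoneOn hs (hs.trans_le hsr) hsr

theorem monotoneOn_weight (hw : IsExpMulMonotone K u w) (hK : 0 ≤ K) : MonotoneOn w (Ioi 0) :=
  fun s hs r _ hsr => (hw.le_exp_mul hs hsr).trans <| by
    rw [hw.eq_exp_mul r (hs.trans_le hsr)]
    gcongr
    exact (hw.pos r (hs.trans_le hsr)).le

theorem le_of_tendsto (hw : IsExpMulMonotone K u w) (hu : Tendsto u atTop (𝓝 C)) (hr : 0 < r) :
    u r ≤ C :=
  ge_of_tendsto hu ((eventually_ge_atTop r).mono fun _ hs =>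
    hw.monotoneOn hr (hr.trans_le hs) hs)

end IsExpMulMonotone

noncomputable def variationOfConstants (η w : ℝ → ℝ) (r : ℝ) : ℝ :=
  2 / w r * ∫ s in Ioo 0 r, η s * w s

section VariationOfConstants

variable {K C c₁ c₂ r s₀ : ℝ} {η u w : ℝ → ℝ}

theorem integrableOn_mul_weight (hK : 0 ≤ K) (hw : IsExpMulMonotone K u w)
    (hwc : ContinuousOn w (Ioi 0)) (hη : ContinuousOn η (Ioi 0))
    (hηb : ∀ s, 0 < s → c₁ ≤ η s ∧ η s ≤ c₂) (hc₁ : 0 ≤ c₁) (r : ℝ) :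
    IntegrableOn (fun s => η s * w s) (Ioo 0 r) := by
  refine IntegrableOn.of_bound measure_Ioo_lt_top
    (((hη.mul hwc).mono Ioo_subset_Ioi_self).aestronglyMeasurable measurableSet_Ioo) (c₂ * w r)
    ((ae_restrict_iff' measurableSet_Ioo).2 (Eventually.of_forall fun s ⟨hs, hsr⟩ => ?_))
  have hws := (hw.weight_pos hs).le
  rw [norm_of_nonneg (mul_nonneg (hc₁.trans (hηb s hs).1) hws)]
  exact mul_le_mul (hηb s hs).2 (hw.monotoneOn_weight hK hs (hs.trans hsr) hsr.le) hws
    (hc₁.trans ((hηb s hs).1.trans (hηb s hs).2))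

theorem setIntegral_mul_weight_le (hK : 0 < K) (hw : IsExpMulMonotone K u w)
    (hint : IntegrableOn (fun s => η s * w s) (Ioo 0 r)) (hη : ∀ s, 0 < s → η s ≤ c₂)
    (hc₂ : 0 ≤ c₂) (hr : 0 < r) :
    ∫ s in Ioo 0 r, η s * w s ≤ c₂ * w r / K := by
  calc ∫ s in Ioo 0 r, η s * w s ≤ ∫ s in Ioo 0 r, c₂ * u r * exp (K * s) :=
        setIntegral_mono_on hint ((integrableOn_exp_const_mul K 0 r).const_mul _)
          measurableSet_Ioo fun s ⟨hs, hsr⟩ => by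
            calc η s * w s ≤ c₂ * w s :=
                  mul_le_mul_of_nonneg_right (hη s hs) (hw.weight_pos hs).le
              _ ≤ c₂ * (exp (K * s) * u r) :=
                  mul_le_mul_of_nonneg_left (hw.le_exp_mul hs hsr.le) hc₂
              _ = c₂ * u r * exp (K * s) := by ring
    _ = c₂ * u r * (exp (K * r) - 1) / K := by
        rw [integral_const_mul, integral_Ioo_exp_mul hK.ne' hr.le, mul_zero, exp_zero,
          mul_div_assoc]
    _ ≤ c₂ * w r / K := by
        rw [hw.eq_exp_mul r hr]
        gcongr ?_ / _
        nlinarith [mul_nonneg hc₂ (hw.pos r hr).le]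

theorem le_setIntegral_mul_weight (hK : K ≠ 0) (hw : IsExpMulMonotone K u w)
    (hint : IntegrableOn (fun s => η s * w s) (Ioo 0 r)) (hη : ∀ s, 0 < s → c₁ ≤ η s)
    (hc₁ : 0 ≤ c₁) (hs₀ : 0 < s₀) (hs₀r : s₀ ≤ r) :
    c₁ * u s₀ * ((exp (K * r) - exp (K * s₀)) / K) ≤ ∫ s in Ioo 0 r, η s * w s := by
  calc c₁ * u s₀ * ((exp (K * r) - exp (K * s₀)) / K)
        = ∫ s in Ioo s₀ r, c₁ * u s₀ * exp (K * s) := by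
        rw [integral_const_mul, integral_Ioo_exp_mul hK hs₀r]
    _ ≤ ∫ s in Ioo s₀ r, η s * w s :=
        setIntegral_mono_on ((integrableOn_exp_const_mul K s₀ r).const_mul _)
          (hint.mono_set (Ioo_subset_Ioo_left hs₀.le)) measurableSet_Ioo fun s ⟨hs, _⟩ => by
            have hs' : 0 < s := hs₀.trans hs
            calc c₁ * u s₀ * exp (K * s) = c₁ * (exp (K * s) * u s₀) := by ring
              _ ≤ c₁ * w s := mul_le_mul_of_nonneg_left (hw.exp_mul_le hs₀ hs.le) hc₁
              _ ≤ η s * w s := mul_le_mul_of_nonneg_right (hη s hs') (hw.weight_pos hs').le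
    _ ≤ ∫ s in Ioo 0 r, η s * w s :=
        setIntegral_Ioo_mono hs₀.le le_rfl
          (fun s hs => mul_nonneg (hc₁.trans (hη s hs.1)) (hw.weight_pos hs.1).le) hint

theorem variationOfConstants_nonneg (hw : IsExpMulMonotone K u w) (hη : ∀ s, 0 < s → 0 ≤ η s)
    (r : ℝ) : 0 ≤ variationOfConstants η w r := by
  rcases le_or_gt r 0 with hr | hr
  · simp [variationOfConstants, Ioo_eq_empty (not_lt.2 hr)]
  · exact mul_nonneg (div_nonneg zero_le_two (hw.weight_pos hr).le)
      (setIntegral_nonneg measurableSet_Ioo fun s hs =>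
        mul_nonneg (hη s hs.1) (hw.weight_pos hs.1).le)

theorem variationOfConstants_le (hK : 0 < K) (hw : IsExpMulMonotone K u w)
    (hint : IntegrableOn (fun s => η s * w s) (Ioo 0 r)) (hη : ∀ s, 0 < s → η s ≤ c₂)
    (hc₂ : 0 ≤ c₂) : variationOfConstants η w r ≤ 2 * c₂ / K := by
  rcases le_or_gt r 0 with hr | hr
  · simp only [variationOfConstants, Ioo_eq_empty (not_lt.2 hr), Measure.restrict_empty,
      integral_zero_measure, mul_zero]
    positivity
  · have hwr := hw.weight_pos hr
    calc variationOfConstants η w r ≤ 2 / w r * (c₂ * w r / K) :=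
          mul_le_mul_of_nonneg_left (setIntegral_mul_weight_le hK hw hint hη hc₂ hr)
            (by positivity)
      _ = 2 * c₂ / K := by field_simp

theorem le_variationOfConstants (hK : 0 < K) (hw : IsExpMulMonotone K u w)
    (hint : IntegrableOn (fun s => η s * w s) (Ioo 0 r)) (hη : ∀ s, 0 < s → c₁ ≤ η s)
    (hc₁ : 0 ≤ c₁) (hu : Tendsto u atTop (𝓝 C)) (hs₀ : 0 < s₀) (hs₀r : s₀ ≤ r) :
    2 * c₁ / K * (u s₀ / C) * (1 - exp (K * (s₀ - r))) ≤ variationOfConstants η w r := by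
  have hr := hs₀.trans_le hs₀r
  have hwr := hw.weight_pos hr
  have hC : 0 < C := (hw.pos r hr).trans_le (hw.le_of_tendsto hu hr)
  have hwrC : w r ≤ exp (K * r) * C := by
    rw [hw.eq_exp_mul r hr]
    gcongr
    exact hw.le_of_tendsto hu hr
  have hus₀ : 0 ≤ u s₀ := (hw.pos s₀ hs₀).le
  have hexp : exp (K * s₀) ≤ exp (K * r) := by gcongr
  calc 2 * c₁ / K * (u s₀ / C) * (1 - exp (K * (s₀ - r)))
        = 2 / (exp (K * r) * C) * (c₁ * u s₀ * ((exp (K * r) - exp (K * s₀)) / K)) := by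
        rw [mul_sub K, exp_sub]
        field_simp
    _ ≤ 2 / w r * (c₁ * u s₀ * ((exp (K * r) - exp (K * s₀)) / K)) := by
        gcongr
    _ ≤ variationOfConstants η w r :=
        mul_le_mul_of_nonneg_left (le_setIntegral_mul_weight hK.ne' hw hint hη hc₁ hs₀ hs₀r)
          (by positivity)

theorem eventually_le_variationOfConstants (hK : 0 < K) (hw : IsExpMulMonotone K u w)
    (hint : ∀ r, IntegrableOn (fun s => η s * w s) (Ioo 0 r)) (hη : ∀ s, 0 < s → c₁ ≤ η s)
    (hc₁ : 0 ≤ c₁) (hu : Tendsto u atTop (𝓝 C)) :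
    ∀ B < 2 * c₁ / K, ∀ᶠ r in atTop, B ≤ variationOfConstants η w r := by
  intro B hB
  have hC : 0 < C := (hw.pos 1 one_pos).trans_le (hw.le_of_tendsto hu one_pos)
  have hu' : Tendsto (fun s => 2 * c₁ / K * (u s / C)) atTop (𝓝 (2 * c₁ / K)) := by
    simpa [hC.ne'] using (hu.div_const C).const_mul (2 * c₁ / K)
  obtain ⟨s₀, hBs₀, hs₀⟩ :=
    ((hu'.eventually (lt_mem_nhds hB)).and (eventually_gt_atTop 0)).exists
  have hexp : Tendsto (fun r => exp (K * (s₀ - r))) atTop (𝓝 0) :=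
    tendsto_exp_atBot.comp
      ((tendsto_atBot_add_const_left _ s₀ tendsto_neg_atTop_atBot).const_mul_atBot hK)
  have hlim : Tendsto (fun r => 2 * c₁ / K * (u s₀ / C) * (1 - exp (K * (s₀ - r)))) atTop
      (𝓝 (2 * c₁ / K * (u s₀ / C))) := by
    simpa using (hexp.const_sub 1).const_mul (2 * c₁ / K * (u s₀ / C))
  filter_upwards [hlim.eventually (lt_mem_nhds hBs₀), eventually_ge_atTop s₀] with r h hr
  exact h.le.trans (le_variationOfConstants hK hw (hint r) hη hc₁ hu hs₀ hr)

theorem integrableOn_variationOfConstants (hK : 0 < K) (hw : IsExpMulMonotone K u w)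
    (hwc : ContinuousOn w (Ioi 0)) (hint : ∀ r, IntegrableOn (fun s => η s * w s) (Ioo 0 r))
    (hηb : ∀ s, 0 < s → c₁ ≤ η s ∧ η s ≤ c₂) (hc₁ : 0 ≤ c₁) (r : ℝ) :
    IntegrableOn (variationOfConstants η w) (Ioo 0 r) := by
  have hη : ∀ s, 0 < s → 0 ≤ η s := fun s hs => hc₁.trans (hηb s hs).1
  have hc₂ : 0 ≤ c₂ := (hη 1 one_pos).trans (hηb 1 one_pos).2
  have hmono : Monotone fun r => ∫ s in Ioo 0 r, η s * w s := fun a b hab =>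
    setIntegral_Ioo_mono le_rfl hab
      (fun s hs => mul_nonneg (hη s hs.1) (hw.weight_pos hs.1).le) (hint b)
  have hdiv : ContinuousOn (fun r => 2 / w r) (Ioo 0 r) :=
    continuousOn_const.div (hwc.mono Ioo_subset_Ioi_self) fun s hs => (hw.weight_pos hs.1).ne'
  refine IntegrableOn.of_bound measure_Ioo_lt_top
    ((hdiv.aestronglyMeasurable measurableSet_Ioo).mul hmono.measurable.aestronglyMeasurable)
    (2 * c₂ / K) (Eventually.of_forall fun t => ?_)
  rw [norm_of_nonneg (variationOfConstants_nonneg hw hη t)]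
  exact variationOfConstants_le hK hw (hint t) (fun s hs => (hηb s hs).2) hc₂

end VariationOfConstants

noncomputable def sinhDivExp (r : ℝ) : ℝ := sinh r / exp r

theorem sinhDivExp_eq (r : ℝ) : sinhDivExp r = (1 - exp (-(2 * r))) / 2 := by
  have hexp : exp (-(2 * r)) = exp (-r) / exp r := by rw [← exp_sub]; ring_nf
  rw [sinhDivExp, sinh_eq, hexp]
  field_simp

theorem exp_mul_sinhDivExp (r : ℝ) : exp r * sinhDivExp r = sinh r := by
  rw [sinhDivExp]; field_simp

theorem sinhDivExp_pos {r : ℝ} (hr : 0 < r) : 0 < sinhDivExp r :=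
  div_pos (sinh_pos_iff.2 hr) (exp_pos r)

theorem monotone_sinhDivExp : Monotone sinhDivExp := fun a b hab => by
  rw [sinhDivExp_eq, sinhDivExp_eq]
  gcongr

theorem tendsto_sinhDivExp : Tendsto sinhDivExp atTop (𝓝 (1 / 2)) := by
  have h : Tendsto (fun r : ℝ => exp (-(2 * r))) atTop (𝓝 0) :=
    tendsto_exp_atBot.comp (tendsto_neg_atTop_atBot.comp (tendsto_id.const_mul_atTop two_pos))
  simpa [funext sinhDivExp_eq] using (h.const_sub 1).div_const 2

noncomputable def sinhWeightProfile (m₁ m₂ r : ℝ) : ℝ := sinhDivExp r ^ m₁ * sinhDivExp (2 * r) ^ m₂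

theorem isExpMulMonotone_sinhWeight {m₁ m₂ : ℝ} (hm₁ : 0 ≤ m₁) (hm₂ : 0 ≤ m₂) :
    IsExpMulMonotone (m₁ + 2 * m₂) (sinhWeightProfile m₁ m₂)
      (fun r => sinh r ^ m₁ * sinh (2 * r) ^ m₂) where
  eq_exp_mul r hr := by
    simp only [sinhWeightProfile, ← exp_mul_sinhDivExp r, ← exp_mul_sinhDivExp (2 * r)]
    rw [mul_rpow (exp_pos _).le (sinhDivExp_pos hr).le,
      mul_rpow (exp_pos _).le (sinhDivExp_pos (by positivity)).le, ← exp_mul, ← exp_mul,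
      show (m₁ + 2 * m₂) * r = r * m₁ + 2 * r * m₂ by ring, exp_add]
    ring
  pos r hr := mul_pos (rpow_pos_of_pos (sinhDivExp_pos hr) _)
    (rpow_pos_of_pos (sinhDivExp_pos (by positivity)) _)
  monotoneOn a ha b hb hab := by
    have ha : 0 < a := ha
    have hb : 0 < b := hb
    have h2a := (sinhDivExp_pos (show 0 < 2 * a by positivity)).le
    exact mul_le_mul (rpow_le_rpow (sinhDivExp_pos ha).le (monotone_sinhDivExp hab) hm₁)
      (rpow_le_rpow h2a (monotone_sinhDivExp (by linarith)) hm₂) (rpow_nonneg h2a _)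
      (rpow_nonneg (sinhDivExp_pos hb).le _)

theorem tendsto_sinhWeightProfile (m₁ m₂ : ℝ) :
    Tendsto (sinhWeightProfile m₁ m₂) atTop (𝓝 ((1 / 2) ^ m₁ * (1 / 2) ^ m₂)) := by
  have hpow (m : ℝ) := (continuousAt_rpow_const (1 / 2 : ℝ) m (Or.inl (by norm_num))).tendsto
  exact ((hpow m₁).comp tendsto_sinhDivExp).mul
    ((hpow m₂).comp (tendsto_sinhDivExp.comp (tendsto_id.const_mul_atTop two_pos)))

theorem continuousOn_sinhWeight (m₁ m₂ : ℝ) :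
    ContinuousOn (fun r => sinh r ^ m₁ * sinh (2 * r) ^ m₂) (Ioi 0) := by
  intro r hr
  have hr : 0 < r := hr
  apply ContinuousAt.continuousWithinAt
  exact ((continuous_sinh.continuousAt).rpow_const (Or.inl (sinh_pos_iff.2 hr).ne')).mul
    ((continuous_sinh.comp (continuous_const_mul 2)).continuousAt.rpow_const
      (Or.inl (sinh_pos_iff.2 (by positivity)).ne'))

/-- Let `m₁, m₂ ≥ 0` with `m₁ + 2m₂ > 0`, let
`f(r) = (sinh r)^{m₁} (sinh 2r)^{m₂}`, let `η : (0,∞) → ℝ` be continuous with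
`0 < c₁ ≤ η ≤ c₂`, and set `ψ(r) = (2/f r) ∫₀^r η f` and `φ(r) = ∫₀^r ψ`. Then
`liminf φ(r)/r ≥ 2c₁/(m₁+2m₂)` and `limsup φ(r)/r ≤ 2c₂/(m₁+2m₂)`; in particular
`φ(r) ≍ r` as `r → ∞`. -/
theorem growth_of_variation_of_constants_solution
    (m₁ m₂ : ℝ) (hm₁ : 0 ≤ m₁) (hm₂ : 0 ≤ m₂) (hm : 0 < m₁ + 2 * m₂)
    (c₁ c₂ : ℝ) (hc₁ : 0 < c₁)
    (η : ℝ → ℝ) (hηcont : ContinuousOn η (Set.Ioi (0 : ℝ)))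
    (hηbounds : ∀ s : ℝ, 0 < s → c₁ ≤ η s ∧ η s ≤ c₂)
    (f ψ φ : ℝ → ℝ)
    (hf : ∀ r : ℝ, f r = Real.sinh r ^ m₁ * Real.sinh (2 * r) ^ m₂)
    (hψ : ∀ r : ℝ, ψ r = (2 / f r) * ∫ s in Set.Ioo (0 : ℝ) r, η s * f s)
    (hφ : ∀ r : ℝ, φ r = ∫ t in Set.Ioo (0 : ℝ) r, ψ t) :
    2 * c₁ / (m₁ + 2 * m₂) ≤ liminf (fun r : ℝ => φ r / r) atTop ∧
      limsup (fun r : ℝ => φ r / r) atTop ≤ 2 * c₂ / (m₁ + 2 * m₂) ∧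
      ∃ a b R : ℝ, 0 < a ∧ a ≤ b ∧ 0 < R ∧ ∀ r : ℝ, R ≤ r → a * r ≤ φ r ∧ φ r ≤ b * r := by
  obtain rfl : f = fun r => sinh r ^ m₁ * sinh (2 * r) ^ m₂ := funext hf
  obtain rfl : ψ = variationOfConstants η _ := funext hψ
  obtain rfl : φ = fun r => ∫ t in Ioo 0 r, variationOfConstants η _ t := funext hφ
  have hw := isExpMulMonotone_sinhWeight hm₁ hm₂
  have hc₁₂ : c₁ ≤ c₂ := (hηbounds 1 one_pos).1.trans (hηbounds 1 one_pos).2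
  have hint := integrableOn_mul_weight hm.le hw (continuousOn_sinhWeight m₁ m₂) hηcont hηbounds
    hc₁.le
  have hψint := integrableOn_variationOfConstants hm hw (continuousOn_sinhWeight m₁ m₂) hint
    hηbounds hc₁.le
  have hφ_upper : ∀ᶠ r in atTop, _ ≤ 2 * c₂ / (m₁ + 2 * m₂) * r :=
    (eventually_ge_atTop 0).mono fun r hr => setIntegral_Ioo_zero_le_mul
      (fun t => variationOfConstants_le hm hw (hint t) (fun s hs => (hηbounds s hs).2)
        (by linarith)) (hψint r) hr
  have hφ_lower := eventually_mul_le_setIntegral_Ioo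
    (fun t _ => variationOfConstants_nonneg hw (fun s hs => hc₁.le.trans (hηbounds s hs).1) t)
    hψint (eventually_le_variationOfConstants hm hw hint (fun s hs => (hηbounds s hs).1) hc₁.le
      (tendsto_sinhWeightProfile m₁ m₂))
  refine ⟨le_liminf_div_self hφ_lower hφ_upper,
    limsup_div_self_le (hφ_lower 0 (by positivity)) hφ_upper, ?_⟩
  obtain ⟨R, hR⟩ := eventually_atTop.1
    ((hφ_lower (c₁ / (m₁ + 2 * m₂)) (div_lt_div_of_pos_right (by linarith) hm)).and hφ_upper)
  refine ⟨c₁ / (m₁ + 2 * m₂), 2 * c₂ / (m₁ + 2 * m₂), max R 1, by positivity,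
    div_le_div_of_nonneg_right (by linarith) hm.le, by positivity,
    fun r hr => hR r ((le_max_left _ _).trans hr)⟩
end
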